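/- arXiv:2308.01788 — 2 statements merged into one kernel-verified Lean document; each statement's English description precedes it below -/
import Mathlib

section
/- For every ρ > 0 and all y₁, y₂ ∈ E with ‖y₁‖ ≤ ρ and ‖y₂‖ ≤ ρ, the normalization constant is Lipschitz continuous in the data: |Λ(y₁) − Λ(y₂)| ≤ (K + ρ) ‖y₁ − y₂‖. -/
open MeasureTheory Real

/-!
The likelihood `exp (-½‖y - G Z‖²)` is `(K + ρ)`-Lipschitz in `y` on the ball of radius `ρ`,
uniformly in `Z`: `t ↦ exp (-t)` is `1`-Lipschitz on `[0, ∞)`, and `½‖·‖²` is `R`-Lipschitz on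
the ball of radius `R = K + ρ`, which contains every residual `y - G Z`. Integrating this
pointwise bound against the probability measure `ν₀` gives the bound on `Λ`.
-/

namespace Real

theorem exp_neg_sub_exp_neg_le {a b : ℝ} (ha : 0 ≤ a) (hab : a ≤ b) :
    exp (-a) - exp (-b) ≤ b - a :=
  calc exp (-a) - exp (-b) = exp (-a) * (1 - exp (-(b - a))) := by
        rw [mul_sub, mul_one, ← exp_add]; ring_nf
    _ ≤ 1 * (b - a) := by
        refine mul_le_mul (exp_le_one_iff.2 (neg_nonpos.2 ha)) ?_ ?_ zero_le_one
        · linarith [add_one_le_exp (-(b - a))]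
        · linarith [exp_le_one_iff.2 (neg_nonpos.2 (sub_nonneg.2 hab))]
    _ = b - a := one_mul _

theorem abs_exp_neg_sub_exp_neg_le {a b : ℝ} (ha : 0 ≤ a) (hb : 0 ≤ b) :
    |exp (-a) - exp (-b)| ≤ |a - b| := by
  rcases le_total a b with hab | hba
  · rw [abs_sub_comm a b, abs_of_nonneg (sub_nonneg.2 hab),
      abs_of_nonneg (sub_nonneg.2 (exp_le_exp.2 (neg_le_neg hab)))]
    exact exp_neg_sub_exp_neg_le ha hab
  · rw [abs_sub_comm, abs_of_nonneg (sub_nonneg.2 hba),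
      abs_of_nonneg (sub_nonneg.2 (exp_le_exp.2 (neg_le_neg hba)))]
    exact exp_neg_sub_exp_neg_le hb hba

end Real

section NormedGroup

variable {E : Type*} [SeminormedAddCommGroup E]

theorem abs_half_sq_norm_sub_half_sq_norm_le {u v : E} {R : ℝ} (hu : ‖u‖ ≤ R) (hv : ‖v‖ ≤ R) :
    |1 / 2 * ‖u‖ ^ 2 - 1 / 2 * ‖v‖ ^ 2| ≤ R * ‖u - v‖ :=
  calc |1 / 2 * ‖u‖ ^ 2 - 1 / 2 * ‖v‖ ^ 2| = 1 / 2 * |‖u‖ - ‖v‖| * (‖u‖ + ‖v‖) := by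
        rw [show 1 / 2 * ‖u‖ ^ 2 - 1 / 2 * ‖v‖ ^ 2 = 1 / 2 * (‖u‖ - ‖v‖) * (‖u‖ + ‖v‖) by ring,
          abs_mul, abs_mul, abs_of_pos one_half_pos,
          abs_of_nonneg (add_nonneg (norm_nonneg u) (norm_nonneg v))]
    _ ≤ 1 / 2 * ‖u - v‖ * (R + R) := by gcongr; exact abs_norm_sub_norm_le u v
    _ = R * ‖u - v‖ := by ring

theorem abs_exp_neg_half_sq_norm_sub_le {u v : E} {R : ℝ} (hu : ‖u‖ ≤ R) (hv : ‖v‖ ≤ R) :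
    |exp (-(1 / 2 * ‖u‖ ^ 2)) - exp (-(1 / 2 * ‖v‖ ^ 2))| ≤ R * ‖u - v‖ :=
  (abs_exp_neg_sub_exp_neg_le (by positivity) (by positivity)).trans
    (abs_half_sq_norm_sub_half_sq_norm_le hu hv)

end NormedGroup

section Likelihood

variable {U : Type*} [MeasurableSpace U] {E : Type*} [SeminormedAddCommGroup E]
  [MeasurableSpace E] [OpensMeasurableSpace E]

theorem integrable_exp_neg_half_sq_norm_sub (μ : Measure U) [IsFiniteMeasure μ] {G : U → E}
    (hG : Measurable G) (y : E) :
    Integrable (fun Z ↦ exp (-(1 / 2 * ‖y - G Z‖ ^ 2))) μ := by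
  have hcont : Continuous fun x : E ↦ exp (-(1 / 2 * ‖y - x‖ ^ 2)) := by fun_prop
  refine .of_bound (hcont.measurable.comp hG).aestronglyMeasurable 1
    (ae_of_all _ fun Z ↦ ?_)
  rw [norm_of_nonneg (exp_nonneg _), exp_le_one_iff, neg_nonpos]
  positivity

theorem abs_integral_sub_integral_le_of_abs_sub_le {μ : Measure U} [IsProbabilityMeasure μ]
    {f g : U → ℝ} (hf : Integrable f μ) (hg : Integrable g μ) {C : ℝ}
    (hfg : ∀ Z, |f Z - g Z| ≤ C) :
    |∫ Z, f Z ∂μ - ∫ Z, g Z ∂μ| ≤ C := by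
  rw [← integral_sub hf hg, ← norm_eq_abs]
  have hfg' : ∀ᵐ Z ∂μ, ‖f Z - g Z‖ ≤ C := ae_of_all _ fun Z ↦ (norm_eq_abs _).trans_le (hfg Z)
  simpa only [probReal_univ, mul_one] using norm_integral_le_of_norm_le_const hfg'

end Likelihood

theorem normalization_constant_lipschitz_general
    {U : Type*} [MeasurableSpace U] {E : Type*}
    [NormedAddCommGroup E]
    [MeasurableSpace E] [OpensMeasurableSpace E]
    (ν₀ : Measure U) [IsProbabilityMeasure ν₀]
    (G : U → E) (hGmeas : Measurable G) (K : ℝ) (hK : ∀ Z, ‖G Z‖ ≤ K)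
    (θ : U → E → ℝ) (hθ : ∀ Z y, θ Z y = Real.exp (-((1 / 2) * ‖y - G Z‖ ^ 2)))
    (Λ : E → ℝ) (hΛ : ∀ y, Λ y = ∫ Z, θ Z y ∂ν₀) :
    ∀ ρ : ℝ, 0 < ρ → ∀ y₁ y₂ : E, ‖y₁‖ ≤ ρ → ‖y₂‖ ≤ ρ →
      |Λ y₁ - Λ y₂| ≤ (K + ρ) * ‖y₁ - y₂‖ := by
  intro ρ _ y₁ y₂ hy₁ hy₂
  have residual_le : ∀ {y : E}, ‖y‖ ≤ ρ → ∀ Z, ‖y - G Z‖ ≤ K + ρ := fun hy Z ↦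
    (norm_sub_le _ _).trans (by linarith [hK Z])
  simp only [hΛ, hθ]
  refine abs_integral_sub_integral_le_of_abs_sub_le
    (integrable_exp_neg_half_sq_norm_sub ν₀ hGmeas y₁)
    (integrable_exp_neg_half_sq_norm_sub ν₀ hGmeas y₂) fun Z ↦ ?_
  simpa only [sub_sub_sub_cancel_right] using
    abs_exp_neg_half_sq_norm_sub_le (residual_le hy₁ Z) (residual_le hy₂ Z)

/-- For every `ρ > 0` and all `y₁, y₂ ∈ E` with `‖y₁‖ ≤ ρ` and
`‖y₂‖ ≤ ρ`, the normalization constant `Λ(y) = ∫_U exp(−½‖y − G(Z)‖²) dν₀(Z)`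
is Lipschitz in the data: `|Λ(y₁) − Λ(y₂)| ≤ (K + ρ) ‖y₁ − y₂‖`. -/
theorem normalization_constant_lipschitz
    {U : Type*} [MeasurableSpace U] {E : Type*}
    [NormedAddCommGroup E] [InnerProductSpace ℝ E]
    [MeasurableSpace E] [OpensMeasurableSpace E]
    (ν₀ : Measure U) [IsProbabilityMeasure ν₀]
    (G : U → E) (hGmeas : Measurable G) (K : ℝ) (hK : ∀ Z, ‖G Z‖ ≤ K)
    (θ : U → E → ℝ) (hθ : ∀ Z y, θ Z y = Real.exp (-((1 / 2) * ‖y - G Z‖ ^ 2)))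
    (Λ : E → ℝ) (hΛ : ∀ y, Λ y = ∫ Z, θ Z y ∂ν₀) :
    ∀ ρ : ℝ, 0 < ρ → ∀ y₁ y₂ : E, ‖y₁‖ ≤ ρ → ‖y₂‖ ≤ ρ →
      |Λ y₁ - Λ y₂| ≤ (K + ρ) * ‖y₁ - y₂‖ :=
  normalization_constant_lipschitz_general ν₀ G hGmeas K hK θ hθ Λ hΛ
end

section
/- For every ρ > 0 there exists a constant c = c(ρ, K) > 0 such that for all y₁, y₂ ∈ E with ‖y₁‖ ≤ ρ and ‖y₂‖ ≤ ρ, and for every measurable φ : U → ℝ with ∫_U |φ| dν₀ < ∞, the posterior expectation is stable with respect to the data: |∫_U φ dν^{y₁} − ∫_U φ dν^{y₂}| ≤ c · (∫_U |φ| dν₀) · ‖y₁ − y₂‖. -/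
/-!
The likelihood `θ(Z, y) = exp(-½‖y - G Z‖²)` is `1`-Lipschitz in `y` (the Gaussian profile
`t ↦ exp(-t²/2)` has slope at most `1`) and, for `‖y‖ ≤ ρ`, is bounded below by
`m = exp(-½(ρ + K)²)`, hence so is the normalisation constant `Λ(y)`. Writing the posterior
expectation as `Λ(y)⁻¹ ∫ θ(·, y) φ dν₀`, the difference of two such quotients is controlled by the
differences of numerators and denominators divided by `Λ(y₁) Λ(y₂) ≥ m²`, which gives
`c = 2 / m²`.
-/

open MeasureTheory Real

lemma abs_mul_exp_neg_half_sq_le_one (t : ℝ) : |t * exp (-((1 / 2) * t ^ 2))| ≤ 1 := by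
  have hgrowth : |t| ≤ exp ((1 / 2) * t ^ 2) :=
    calc |t| ≤ (1 / 2) * t ^ 2 + 1 := by nlinarith [sq_nonneg (|t| - 1), sq_abs t]
      _ ≤ exp ((1 / 2) * t ^ 2) := add_one_le_exp _
  calc |t * exp (-((1 / 2) * t ^ 2))| = |t| * exp (-((1 / 2) * t ^ 2)) := by
        rw [abs_mul, abs_exp]
    _ ≤ exp ((1 / 2) * t ^ 2) * exp (-((1 / 2) * t ^ 2)) := by gcongr
    _ = 1 := by rw [← exp_add, add_neg_cancel, exp_zero]

lemma lipschitzWith_one_exp_neg_half_sq :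
    LipschitzWith 1 fun t : ℝ ↦ exp (-((1 / 2) * t ^ 2)) := by
  have hderiv (t : ℝ) :
      HasDerivAt (fun t : ℝ ↦ exp (-((1 / 2) * t ^ 2))) (-(t * exp (-((1 / 2) * t ^ 2)))) t := by
    convert (((hasDerivAt_pow 2 t).const_mul (1 / 2)).fun_neg).exp using 1
    push_cast
    ring
  refine lipschitzWith_of_nnnorm_deriv_le (fun t ↦ (hderiv t).differentiableAt) fun t ↦ ?_
  rw [← NNReal.coe_le_coe, coe_nnnorm, (hderiv t).deriv, norm_neg, norm_eq_abs]
  exact abs_mul_exp_neg_half_sq_le_one t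

lemma abs_exp_neg_half_norm_sq_sub_le {E : Type*} [SeminormedAddCommGroup E] (u v : E) :
    |exp (-((1 / 2) * ‖u‖ ^ 2)) - exp (-((1 / 2) * ‖v‖ ^ 2))| ≤ ‖u - v‖ := by
  have := lipschitzWith_one_exp_neg_half_sq.dist_le_mul ‖u‖ ‖v‖
  rw [NNReal.coe_one, one_mul, dist_eq, dist_eq] at this
  exact this.trans (abs_norm_sub_norm_le u v)

lemma abs_inv_mul_sub_inv_mul_le {Λ₁ Λ₂ I₁ I₂ m δ A : ℝ} (hm : 0 < m) (hΛ₁ : m ≤ Λ₁)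
    (hΛ₂ : m ≤ Λ₂) (hΛ₂_le : Λ₂ ≤ 1) (hΛ : |Λ₁ - Λ₂| ≤ δ) (hI : |I₁ - I₂| ≤ δ * A)
    (hI₂ : |I₂| ≤ A) :
    |Λ₁⁻¹ * I₁ - Λ₂⁻¹ * I₂| ≤ 2 * δ / m ^ 2 * A := by
  have hΛ₁_pos : 0 < Λ₁ := hm.trans_le hΛ₁
  have hΛ₂_pos : 0 < Λ₂ := hm.trans_le hΛ₂
  have hden : m ^ 2 ≤ Λ₁ * Λ₂ := by nlinarith
  have hnum : |Λ₂ * (I₁ - I₂) - I₂ * (Λ₁ - Λ₂)| ≤ 2 * δ * A := by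
    calc |Λ₂ * (I₁ - I₂) - I₂ * (Λ₁ - Λ₂)|
        ≤ Λ₂ * |I₁ - I₂| + |I₂| * |Λ₁ - Λ₂| := by
          grw [abs_sub, abs_mul, abs_mul, abs_of_pos hΛ₂_pos]
      _ ≤ 1 * (δ * A) + A * δ := by
          have hA : 0 ≤ A := (abs_nonneg _).trans hI₂
          have hδ : 0 ≤ δ := (abs_nonneg _).trans hΛ
          gcongr
      _ = 2 * δ * A := by ring
  calc |Λ₁⁻¹ * I₁ - Λ₂⁻¹ * I₂| = |Λ₂ * (I₁ - I₂) - I₂ * (Λ₁ - Λ₂)| / (Λ₁ * Λ₂) := by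
        rw [← abs_of_pos (mul_pos hΛ₁_pos hΛ₂_pos), ← abs_div]
        congr 1
        field_simp
        ring
    _ ≤ 2 * δ * A / m ^ 2 := by gcongr; exact (abs_nonneg _).trans hnum
    _ = 2 * δ / m ^ 2 * A := by ring

section

variable {U : Type*} [MeasurableSpace U] {μ : Measure U}

lemma abs_integral_mul_le_of_abs_le {h φ : U → ℝ} {δ : ℝ} (hδ : ∀ x, |h x| ≤ δ)
    (hφ : Integrable φ μ) : |∫ x, h x * φ x ∂μ| ≤ δ * ∫ x, |φ x| ∂μ :=
  calc |∫ x, h x * φ x ∂μ| ≤ ∫ x, |h x * φ x| ∂μ := by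
        simpa only [norm_eq_abs] using norm_integral_le_integral_norm (fun x ↦ h x * φ x)
    _ ≤ ∫ x, δ * |φ x| ∂μ := by
        refine integral_mono_of_nonneg (ae_of_all _ fun x ↦ abs_nonneg _)
          (hφ.abs.const_mul δ) (ae_of_all _ fun x ↦ ?_)
        simp only [abs_mul]
        exact mul_le_mul_of_nonneg_right (hδ x) (abs_nonneg _)
    _ = δ * ∫ x, |φ x| ∂μ := integral_const_mul δ _

lemma integral_inv_ofReal_smul_withDensity_ofReal {f : U → ℝ} {c : ℝ} (hc : 0 ≤ c)
    (hf : Measurable f) (hf_nonneg : ∀ x, 0 ≤ f x) (φ : U → ℝ) :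
    ∫ x, φ x ∂((ENNReal.ofReal c)⁻¹ • μ.withDensity fun x ↦ ENNReal.ofReal (f x)) =
      c⁻¹ * ∫ x, f x * φ x ∂μ := by
  rw [integral_smul_measure, integral_withDensity_eq_integral_toReal_smul hf.ennreal_ofReal
    (ae_of_all _ fun _ ↦ ENNReal.ofReal_lt_top), ENNReal.toReal_inv, ENNReal.toReal_ofReal hc]
  simp only [ENNReal.toReal_ofReal (hf_nonneg _), smul_eq_mul]

lemma abs_inv_integral_mul_sub_inv_integral_mul_le [IsProbabilityMeasure μ] {f g φ : U → ℝ}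
    {m δ : ℝ} (hm : 0 < m) (hf : AEStronglyMeasurable f μ) (hg : AEStronglyMeasurable g μ)
    (hmf : ∀ x, m ≤ f x) (hmg : ∀ x, m ≤ g x) (hf_le : ∀ x, f x ≤ 1) (hg_le : ∀ x, g x ≤ 1)
    (hfg : ∀ x, |f x - g x| ≤ δ) (hφ : Integrable φ μ) :
    |(∫ x, f x ∂μ)⁻¹ * ∫ x, f x * φ x ∂μ - (∫ x, g x ∂μ)⁻¹ * ∫ x, g x * φ x ∂μ| ≤
      2 * δ / m ^ 2 * ∫ x, |φ x| ∂μ := by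
  have hf_abs : ∀ x, |f x| ≤ 1 := fun x ↦ abs_le.2 ⟨by linarith [hmf x], hf_le x⟩
  have hg_abs : ∀ x, |g x| ≤ 1 := fun x ↦ abs_le.2 ⟨by linarith [hmg x], hg_le x⟩
  have hf_int : Integrable f μ := .of_bound hf 1 (ae_of_all _ hf_abs)
  have hg_int : Integrable g μ := .of_bound hg 1 (ae_of_all _ hg_abs)
  have hfφ : Integrable (fun x ↦ f x * φ x) μ := hφ.bdd_mul hf (ae_of_all _ hf_abs)
  have hgφ : Integrable (fun x ↦ g x * φ x) μ := hφ.bdd_mul hg (ae_of_all _ hg_abs)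
  refine abs_inv_mul_sub_inv_mul_le hm ?_ ?_ ?_ ?_ ?_ ?_
  · simpa using integral_mono (integrable_const m) hf_int hmf
  · simpa using integral_mono (integrable_const m) hg_int hmg
  · simpa using integral_mono hg_int (integrable_const 1) hg_le
  · rw [← integral_sub hf_int hg_int]
    simpa using abs_integral_mul_le_of_abs_le hfg (integrable_const (1 : ℝ) : Integrable _ μ)
  · rw [← integral_sub hfφ hgφ]
    simpa only [← sub_mul] using abs_integral_mul_le_of_abs_le hfg hφ
  · simpa using abs_integral_mul_le_of_abs_le hg_abs hφ

end

theorem posterior_expectation_stability_general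
    {U : Type*} [MeasurableSpace U] {E : Type*}
    [NormedAddCommGroup E]
    [MeasurableSpace E] [OpensMeasurableSpace E]
    (ν₀ : Measure U) [IsProbabilityMeasure ν₀]
    (G : U → E) (hGmeas : Measurable G) (K : ℝ) (hK : ∀ Z, ‖G Z‖ ≤ K)
    (θ : U → E → ℝ) (hθ : ∀ Z y, θ Z y = Real.exp (-((1 / 2) * ‖y - G Z‖ ^ 2)))
    (Λ : E → ℝ) (hΛ : ∀ y, Λ y = ∫ Z, θ Z y ∂ν₀)
    (νpost : E → Measure U)
    (hνpost : ∀ y, νpost y = (ENNReal.ofReal (Λ y))⁻¹ •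
      ν₀.withDensity (fun Z => ENNReal.ofReal (θ Z y))) :
    ∀ ρ : ℝ, 0 < ρ → ∃ c > 0, ∀ y₁ y₂ : E, ‖y₁‖ ≤ ρ → ‖y₂‖ ≤ ρ →
      ∀ φ : U → ℝ, Measurable φ → Integrable φ ν₀ →
      |(∫ Z, φ Z ∂(νpost y₁)) - ∫ Z, φ Z ∂(νpost y₂)| ≤
        c * (∫ Z, |φ Z| ∂ν₀) * ‖y₁ - y₂‖ := by
  intro ρ _
  set m := exp (-((1 / 2) * (ρ + K) ^ 2)) with hm_def
  refine ⟨2 / m ^ 2, by positivity, fun y₁ y₂ hy₁ hy₂ φ _ hφ ↦ ?_⟩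
  have hθ_meas (y : E) : Measurable (θ · y) := by
    simp only [hθ]
    exact (by fun_prop : Continuous fun v : E ↦ exp (-((1 / 2) * ‖y - v‖ ^ 2))).measurable.comp
      hGmeas
  have hθ_nonneg (Z : U) (y : E) : 0 ≤ θ Z y := hθ Z y ▸ (exp_pos _).le
  have hθ_le_one (Z : U) (y : E) : θ Z y ≤ 1 := by
    rw [hθ, exp_le_one_iff, neg_nonpos]
    positivity
  have hθ_lower {y : E} (hy : ‖y‖ ≤ ρ) (Z : U) : m ≤ θ Z y := by
    rw [hθ, hm_def]
    gcongr
    exact (norm_sub_le _ _).trans (add_le_add hy (hK Z))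
  have hθ_lip (Z : U) : |θ Z y₁ - θ Z y₂| ≤ ‖y₁ - y₂‖ := by
    simpa only [hθ, sub_sub_sub_cancel_right] using
      abs_exp_neg_half_norm_sq_sub_le (y₁ - G Z) (y₂ - G Z)
  have hΛ_nonneg (y : E) : 0 ≤ Λ y := hΛ y ▸ integral_nonneg (hθ_nonneg · y)
  rw [hνpost, hνpost, integral_inv_ofReal_smul_withDensity_ofReal (hΛ_nonneg _) (hθ_meas _)
    (hθ_nonneg · _), integral_inv_ofReal_smul_withDensity_ofReal (hΛ_nonneg _) (hθ_meas _)
    (hθ_nonneg · _), hΛ, hΛ]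
  calc _ ≤ 2 * ‖y₁ - y₂‖ / m ^ 2 * ∫ Z, |φ Z| ∂ν₀ :=
        abs_inv_integral_mul_sub_inv_integral_mul_le (by positivity)
          (hθ_meas y₁).aestronglyMeasurable (hθ_meas y₂).aestronglyMeasurable
          (hθ_lower hy₁) (hθ_lower hy₂) (hθ_le_one · y₁) (hθ_le_one · y₂) hθ_lip hφ
    _ = 2 / m ^ 2 * (∫ Z, |φ Z| ∂ν₀) * ‖y₁ - y₂‖ := by ring

/-- For every `ρ > 0` there exists `c = c(ρ, K) > 0` such that for all
`y₁, y₂ ∈ E` with `‖y₁‖ ≤ ρ`, `‖y₂‖ ≤ ρ`, and every measurable `φ : U → ℝ` with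
`∫_U |φ| dν₀ < ∞`, the posterior expectation is stable with respect to the data:
`|∫ φ dν^{y₁} − ∫ φ dν^{y₂}| ≤ c (∫ |φ| dν₀) ‖y₁ − y₂‖`,
where `ν^y = Λ(y)⁻¹ θ(·,y) dν₀`. -/
theorem posterior_expectation_stability
    {U : Type*} [MeasurableSpace U] {E : Type*}
    [NormedAddCommGroup E] [InnerProductSpace ℝ E]
    [MeasurableSpace E] [OpensMeasurableSpace E]
    (ν₀ : Measure U) [IsProbabilityMeasure ν₀]
    (G : U → E) (hGmeas : Measurable G) (K : ℝ) (hK : ∀ Z, ‖G Z‖ ≤ K)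
    (θ : U → E → ℝ) (hθ : ∀ Z y, θ Z y = Real.exp (-((1 / 2) * ‖y - G Z‖ ^ 2)))
    (Λ : E → ℝ) (hΛ : ∀ y, Λ y = ∫ Z, θ Z y ∂ν₀)
    (νpost : E → Measure U)
    (hνpost : ∀ y, νpost y = (ENNReal.ofReal (Λ y))⁻¹ •
      ν₀.withDensity (fun Z => ENNReal.ofReal (θ Z y))) :
    ∀ ρ : ℝ, 0 < ρ → ∃ c > 0, ∀ y₁ y₂ : E, ‖y₁‖ ≤ ρ → ‖y₂‖ ≤ ρ →
      ∀ φ : U → ℝ, Measurable φ → Integrable φ ν₀ →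
      |(∫ Z, φ Z ∂(νpost y₁)) - ∫ Z, φ Z ∂(νpost y₂)| ≤
        c * (∫ Z, |φ Z| ∂ν₀) * ‖y₁ - y₂‖ :=
  posterior_expectation_stability_general ν₀ G hGmeas K hK θ hθ Λ hΛ νpost hνpost
end
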